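/- Let Φ be a quantum channel on M_d(ℂ) with linearly independent Kraus operators K₁, …, K_p, and let Φ^C : M_d(ℂ) → M_p(ℂ) be its complementary channel, Φ^C(X) = ∑_{i,j=1}^p Tr(K_i† K_j X) E_{ij}, where E_{ij} are the matrix units of M_p(ℂ). Let M(Φ^C) be the maximum number M of unit vectors |ψ₁⟩, …, |ψ_M⟩ ∈ ℂ^d such that Tr(Φ^C(|ψ_m⟩⟨ψ_m|) Φ^C(|ψ_{m'}⟩⟨ψ_{m'}|)) = 0 for all m ≠ m', and let D(Φ) be the maximum dimension of a subspace C ⊆ ℂ^d that is correctable for Φ. Then M(Φ^C) + D(Φ) ≤ d + 1. -/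

import Mathlib

open Matrix Filter
open scoped ComplexOrder

/-- The algebra of `n × n` complex matrices. -/
abbrev Mat (n : ℕ) := Matrix (Fin n) (Fin n) ℂ

/-- A linear map between matrix algebras is a quantum channel if it admits a Kraus
representation `Φ(X) = ∑ i, K i * X * (K i)ᴴ` with `∑ i, (K i)ᴴ * K i = 1`. -/
def IsChannel {m n : ℕ} (Φ : Matrix (Fin m) (Fin m) ℂ →ₗ[ℂ] Mat n) : Prop :=
  ∃ (p : ℕ) (K : Fin p → Matrix (Fin n) (Fin m) ℂ),
    (∀ X, Φ X = ∑ i, K i * X * (K i)ᴴ) ∧ ∑ i, (K i)ᴴ * K i = 1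

/-- A quantum state: positive semidefinite with unit trace. -/
def IsState {n : ℕ} (ρ : Mat n) : Prop := ρ.PosSemidef ∧ ρ.trace = 1

/-- The rank-one matrix `|ψ⟩⟨ψ|`. -/
def pureState {ι : Type*} (ψ : ι → ℂ) : Matrix ι ι ℂ :=
  Matrix.of fun i j => ψ i * star (ψ j)

/-- `ψ` is a unit vector. -/
def IsUnitVec {ι : Type*} [Fintype ι] (ψ : ι → ℂ) : Prop :=
  ∑ i, star (ψ i) * ψ i = 1

/-- c-scrambling: outputs of orthogonal pure states are never orthogonal. -/
def CScrambling {n : ℕ} (Φ : Mat n →ₗ[ℂ] Mat n) : Prop :=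
  ∀ ψ φ : Fin n → ℂ, IsUnitVec ψ → IsUnitVec φ → ∑ i, star (ψ i) * φ i = 0 →
    0 < (Φ (pureState ψ) * Φ (pureState φ)).trace

/-- A subspace `C ⊆ ℂ^n` is correctable for `Φ`. -/
def Correctable {n : ℕ} (Φ : Mat n →ₗ[ℂ] Mat n) (C : Submodule ℂ (Fin n → ℂ)) : Prop :=
  ∃ R : Mat n →ₗ[ℂ] Mat n, IsChannel R ∧
    ∀ ρ : Mat n, IsState ρ → LinearMap.range ρ.mulVecLin ≤ C → R (Φ ρ) = ρ

/-- q-scrambling: no correctable subspace of dimension ≥ 2. -/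
def QScrambling {n : ℕ} (Φ : Mat n →ₗ[ℂ] Mat n) : Prop :=
  ∀ C : Submodule ℂ (Fin n → ℂ), Correctable Φ C → Module.finrank ℂ C ≤ 1

/-- Apply `Φ` to the first tensor factor: `(Φ ⊗ id) M`. -/
def tensorId {d₀ n d₁ : ℕ} (Φ : Matrix (Fin d₀) (Fin d₀) ℂ →ₗ[ℂ] Mat n)
    (M : Matrix (Fin d₀ × Fin d₁) (Fin d₀ × Fin d₁) ℂ) :
    Matrix (Fin n × Fin d₁) (Fin n × Fin d₁) ℂ :=
  Matrix.of fun p q => Φ (Matrix.of fun k l => M (k, p.2) (l, q.2)) p.1 q.1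

/-- Vanishing one-shot zero-error entanglement-assisted classical capacity. -/
def VanishingC0E {n : ℕ} (Φ : Mat n →ₗ[ℂ] Mat n) : Prop :=
  ∀ (d₀ d₁ : ℕ), 0 < d₀ → 0 < d₁ → ∀ ψ : Fin d₀ × Fin d₁ → ℂ, IsUnitVec ψ →
    ∀ E₁ E₂ : Matrix (Fin d₀) (Fin d₀) ℂ →ₗ[ℂ] Mat n, IsChannel E₁ → IsChannel E₂ →
      0 < (tensorId (Φ ∘ₗ E₁) (pureState ψ) * tensorId (Φ ∘ₗ E₂) (pureState ψ)).trace

/-- Mixing channel: `Φ^n X → Tr(X) ρ⋆` entrywise. -/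
def Mixing {n : ℕ} (Φ : Module.End ℂ (Mat n)) : Prop :=
  ∃ ρ : Mat n, IsState ρ ∧
    ∀ X : Mat n, Tendsto (fun k => (Φ ^ k) X) atTop (nhds (X.trace • ρ))

/-- Strictly positive channel: every state is sent to a positive definite matrix. -/
def StrictlyPositive {n : ℕ} (Φ : Mat n →ₗ[ℂ] Mat n) : Prop :=
  ∀ ρ : Mat n, IsState ρ → (Φ ρ).PosDef

/-- Primitive channel: mixing with positive definite invariant state. -/
def Primitive {n : ℕ} (Φ : Module.End ℂ (Mat n)) : Prop :=
  ∃ ρ : Mat n, IsState ρ ∧ ρ.PosDef ∧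
    ∀ X : Mat n, Tendsto (fun k => (Φ ^ k) X) atTop (nhds (X.trace • ρ))

/-- Classical scrambling time `c(Φ)`. -/
noncomputable def cTime {n : ℕ} (Φ : Module.End ℂ (Mat n)) : ℕ∞ :=
  sInf {N : ℕ∞ | ∃ k : ℕ, N = k ∧ 1 ≤ k ∧ CScrambling (Φ ^ k)}

/-- Quantum scrambling time `q(Φ)`. -/
noncomputable def qTime {n : ℕ} (Φ : Module.End ℂ (Mat n)) : ℕ∞ :=
  sInf {N : ℕ∞ | ∃ k : ℕ, N = k ∧ 1 ≤ k ∧ QScrambling (Φ ^ k)}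

/-- Entanglement-assisted classical scrambling time `c_E(Φ)`. -/
noncomputable def cETime {n : ℕ} (Φ : Module.End ℂ (Mat n)) : ℕ∞ :=
  sInf {N : ℕ∞ | ∃ k : ℕ, N = k ∧ 1 ≤ k ∧ VanishingC0E (Φ ^ k)}

/-- Wielandt index `w(Φ)`. -/
noncomputable def wTime {n : ℕ} (Φ : Module.End ℂ (Mat n)) : ℕ∞ :=
  sInf {N : ℕ∞ | ∃ k : ℕ, N = k ∧ 1 ≤ k ∧ StrictlyPositive (Φ ^ k)}

/-- `M(Φ)`: the maximal size of a zero-error classical code for `Φ`. -/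
noncomputable def Mclassical {n : ℕ} (Φ : Mat n →ₗ[ℂ] Mat n) : ℕ :=
  sSup {M : ℕ | ∃ ψ : Fin M → Fin n → ℂ, (∀ m, IsUnitVec (ψ m)) ∧
    ∀ m m', m ≠ m' → (Φ (pureState (ψ m)) * Φ (pureState (ψ m'))).trace = 0}

/-- `D(Φ)`: the maximal dimension of a correctable subspace for `Φ`. -/
noncomputable def Dquantum {n : ℕ} (Φ : Mat n →ₗ[ℂ] Mat n) : ℕ :=
  sSup {M : ℕ | ∃ C : Submodule ℂ (Fin n → ℂ), Correctable Φ C ∧ Module.finrank ℂ C = M}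

/-- `M_E(Φ)`: the maximal size of an entanglement-assisted zero-error classical code. -/
noncomputable def MEclassical {n : ℕ} (Φ : Mat n →ₗ[ℂ] Mat n) : ℕ :=
  sSup {M : ℕ | ∃ (d₀ d₁ : ℕ) (ψ : Fin d₀ × Fin d₁ → ℂ), 0 < d₀ ∧ 0 < d₁ ∧ IsUnitVec ψ ∧
    ∃ E : Fin M → (Matrix (Fin d₀) (Fin d₀) ℂ →ₗ[ℂ] Mat n),
      (∀ m, IsChannel (E m)) ∧
      ∀ m m', m ≠ m' →
        (tensorId (Φ ∘ₗ E m) (pureState ψ) * tensorId (Φ ∘ₗ E m') (pureState ψ)).trace = 0}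

/-- The ordered product `K_{i 0} ⋯ K_{i (n-1)}` of Kraus operators. -/
noncomputable def krausProd {d p : ℕ} (K : Fin p → Mat d) {n : ℕ} (i : Fin n → Fin p) : Mat d :=
  (List.ofFn fun t => K (i t)).prod

/-- The operator system of `Φ^n`, for `Φ` with Kraus operators `K`. -/
noncomputable def opSys {d p : ℕ} (K : Fin p → Mat d) (n : ℕ) : Submodule ℂ (Mat d) :=
  Submodule.span ℂ {X | ∃ i j : Fin n → Fin p, X = (krausProd K i)ᴴ * krausProd K j}

/-- `𝒦_n(Φ)`: the span of `n`-fold products of Kraus operators. -/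
noncomputable def kSpan {d p : ℕ} (K : Fin p → Mat d) (n : ℕ) : Submodule ℂ (Mat d) :=
  Submodule.span ℂ {X | ∃ i : Fin n → Fin p, X = krausProd K i}

/-- `A` is column stochastic. -/
def ColumnStochastic {d : ℕ} (A : Matrix (Fin d) (Fin d) ℝ) : Prop :=
  (∀ i j, 0 ≤ A i j) ∧ ∀ j, ∑ i, A i j = 1

/-- The CDUC map `Φ_{A,B}(X) = ∑ᵢⱼ A i j * X j j |i⟩⟨i| + ∑_{i≠j} B i j * X i j |i⟩⟨j|`. -/
noncomputable def cducMap {d : ℕ} (A : Matrix (Fin d) (Fin d) ℝ) (B : Mat d) :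
    Mat d →ₗ[ℂ] Mat d where
  toFun X := Matrix.of fun i j =>
    if i = j then ∑ k, (A i k : ℂ) * X k k else B i j * X i j
  map_add' X Y := by
    ext i j
    by_cases h : i = j <;>
      simp [h, Matrix.add_apply, mul_add, Finset.sum_add_distrib]
  map_smul' c X := by
    ext i j
    by_cases h : i = j <;>
      simp [h, Matrix.smul_apply, smul_eq_mul, Finset.mul_sum, mul_left_comm]

/-- The DUC map `Φ_{A,C}(X) = ∑ᵢⱼ A i j * X j j |i⟩⟨i| + ∑_{i≠j} C i j * X j i |i⟩⟨j|`. -/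
noncomputable def ducMap {d : ℕ} (A : Matrix (Fin d) (Fin d) ℝ) (C : Mat d) :
    Mat d →ₗ[ℂ] Mat d where
  toFun X := Matrix.of fun i j =>
    if i = j then ∑ k, (A i k : ℂ) * X k k else C i j * X j i
  map_add' X Y := by
    ext i j
    by_cases h : i = j <;>
      simp [h, Matrix.add_apply, mul_add, Finset.sum_add_distrib]
  map_smul' c X := by
    ext i j
    by_cases h : i = j <;>
      simp [h, Matrix.smul_apply, smul_eq_mul, Finset.mul_sum, mul_left_comm]

/-- The classical channel `Φ_A(X) = ∑ᵢⱼ A i j * X j j |i⟩⟨i|` of a stochastic matrix `A`. -/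
noncomputable def classicalChannel {d : ℕ} (A : Matrix (Fin d) (Fin d) ℝ) :
    Mat d →ₗ[ℂ] Mat d :=
  cducMap A 0

/-- A stochastic matrix is scrambling if any two columns overlap in some row. -/
def MatScrambling {d : ℕ} (A : Matrix (Fin d) (Fin d) ℝ) : Prop :=
  ∀ i j, ∃ k, 0 < A k i * A k j

/-- A matrix with strictly positive entries. -/
def MatStrictlyPositive {d : ℕ} (A : Matrix (Fin d) (Fin d) ℝ) : Prop :=
  ∀ i j, 0 < A i j

/-- A stochastic matrix is mixing if `1` is an eigenvalue of algebraic multiplicity one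
and there is no other eigenvalue of modulus one. -/
def MatMixing {d : ℕ} (A : Matrix (Fin d) (Fin d) ℝ) : Prop :=
  Polynomial.rootMultiplicity 1 (Matrix.charpoly (A.map Complex.ofReal)) = 1 ∧
  ∀ μ : ℂ, ‖μ‖ = 1 → (Matrix.charpoly (A.map Complex.ofReal)).IsRoot μ → μ = 1

/-- A stochastic matrix is primitive if it is mixing and its invariant probability
vector is entrywise strictly positive. -/
def MatPrimitive {d : ℕ} (A : Matrix (Fin d) (Fin d) ℝ) : Prop :=
  MatMixing A ∧
    ∀ v : Fin d → ℝ, (∀ i, 0 ≤ v i) → ∑ i, v i = 1 → A *ᵥ v = v → ∀ i, 0 < v i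

/-- The scrambling time of a stochastic matrix. -/
noncomputable def cMat {d : ℕ} (A : Matrix (Fin d) (Fin d) ℝ) : ℕ∞ :=
  sInf {N : ℕ∞ | ∃ k : ℕ, N = k ∧ 1 ≤ k ∧ MatScrambling (A ^ k)}

/-- The Wielandt index of a stochastic matrix. -/
noncomputable def wMat {d : ℕ} (A : Matrix (Fin d) (Fin d) ℝ) : ℕ∞ :=
  sInf {N : ℕ∞ | ∃ k : ℕ, N = k ∧ 1 ≤ k ∧ MatStrictlyPositive (A ^ k)}

/-- The matrix `A_d` from the paper (0-indexed). -/
noncomputable def Amat (d : ℕ) : Matrix (Fin d) (Fin d) ℝ :=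
  Matrix.of fun i j =>
    if (i : ℕ) = d - 1 ∧ (j : ℕ) = 0 then 1
    else if (j : ℕ) = 1 ∧ ((i : ℕ) = 0 ∨ (i : ℕ) = d - 1) then 1 / 2
    else if 2 ≤ (j : ℕ) ∧ (i : ℕ) + 1 = (j : ℕ) then 1
    else 0

/-- The complementary channel `Φ^C(X) = ∑ᵢⱼ Tr(Kᵢᴴ Kⱼ X) Eᵢⱼ` of a channel with
linearly independent Kraus operators `K`. -/
noncomputable def compChannel {d p : ℕ} (K : Fin p → Mat d) (X : Mat d) : Mat p :=
  Matrix.of fun i j => ((K i)ᴴ * K j * X).trace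

/-!
Write `F(φ, ψ) = Φ(|φ⟩⟨ψ|)`. Since `Tr(Φ^C(|ψ⟩⟨ψ|) Φ^C(|φ⟩⟨φ|)) = Tr(F(φ, ψ)† F(φ, ψ))`, a
zero-error code `ψ₁, …, ψ_M` for `Φ^C` satisfies `Φ(|ψ_m⟩⟨ψ_m'|) = 0` for `m ≠ m'`, and taking
traces it is orthonormal. If `C` is correctable, the Knill–Laflamme argument gives
`⟨K_i x, K_j y⟩ = 0` for orthogonal `x, y ∈ C`, hence `Tr(Φ(|x⟩⟨x|) Φ(|y⟩⟨y|)) = 0`. For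
`x = ∑ a_m ψ_m` and `y = ∑ b_m ψ_m` this trace is
`∑ |a_m|² |b_m'|² Tr(Φ(|ψ_m⟩⟨ψ_m|) Φ(|ψ_m'⟩⟨ψ_m'|))`, a sum of nonnegative terms whose diagonal
traces are positive, so `a_m b_m = 0`. If `M + dim C > d + 1`, then `span ψ ∩ C` contains
orthonormal `u, v`; applying this to `(u, v)` and to `(u + v, u - v)` kills every coefficient
of `u`.
-/

section PureState

variable {ι κ : Type*} [Fintype κ]

lemma pureState_eq_vecMulVec (x : ι → ℂ) : pureState x = vecMulVec x (star x) := rfl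

lemma pureState_mulVec [Fintype ι] (x z : ι → ℂ) : pureState x *ᵥ z = (star x ⬝ᵥ z) • x := by
  rw [pureState_eq_vecMulVec, vecMulVec_mulVec, op_smul_eq_smul]

lemma star_dotProduct_pureState_mulVec [Fintype ι] (x u : ι → ℂ) :
    star u ⬝ᵥ (pureState x *ᵥ u) = (star x ⬝ᵥ u) * star (star x ⬝ᵥ u) := by
  rw [pureState_mulVec, dotProduct_smul, smul_eq_mul, star_dotProduct u x]

lemma pureState_sum_smul (a : κ → ℂ) (ψ : κ → ι → ℂ) :
    pureState (∑ m, a m • ψ m) =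
      ∑ m, ∑ m', (a m * star (a m')) • vecMulVec (ψ m) (star (ψ m')) := by
  ext i j
  simp only [pureState, of_apply, Finset.sum_apply, Pi.smul_apply, smul_eq_mul, star_sum,
    star_mul', Finset.sum_mul_sum, Matrix.sum_apply, Matrix.smul_apply, vecMulVec_apply,
    Pi.star_apply]
  exact Finset.sum_congr rfl fun _ _ => Finset.sum_congr rfl fun _ _ => by ring

lemma map_pureState_sum_smul {N : Type*} [AddCommMonoid N] [Module ℂ N]
    (Φ : Matrix ι ι ℂ →ₗ[ℂ] N) {ψ : κ → ι → ℂ}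
    (hΦ : ∀ m m', m ≠ m' → Φ (vecMulVec (ψ m) (star (ψ m'))) = 0) (a : κ → ℂ) :
    Φ (pureState (∑ m, a m • ψ m)) = ∑ m, (a m * star (a m)) • Φ (pureState (ψ m)) := by
  simp only [pureState_sum_smul, map_sum, map_smul]
  exact Finset.sum_congr rfl fun m _ => Finset.sum_eq_single m
    (fun m' _ hne => by rw [hΦ m m' hne.symm, smul_zero]) (by simp)

lemma star_dotProduct_eq_zero_of_sum_pureState_eq [Fintype ι] {w : κ → ι → ℂ} {z u : ι → ℂ}
    (h : ∑ k, pureState (w k) = pureState z) (hu : star z ⬝ᵥ u = 0) (k : κ) :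
    star (w k) ⬝ᵥ u = 0 := by
  have hq := congrArg (fun A => star u ⬝ᵥ (A *ᵥ u)) h
  simp only [sum_mulVec, dotProduct_sum, star_dotProduct_pureState_mulVec, hu, zero_mul] at hq
  have hk := (Finset.sum_eq_zero_iff_of_nonneg fun k _ => mul_star_self_nonneg _).1 hq k
    (Finset.mem_univ k)
  exact (mul_eq_zero.1 hk).elim id star_eq_zero.1

lemma mul_vecMulVec_star_mul_conjTranspose [Fintype ι] (A : Matrix ι ι ℂ) (a b : ι → ℂ) :
    A * vecMulVec a (star b) * Aᴴ = vecMulVec (A *ᵥ a) (star (A *ᵥ b)) := by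
  rw [mul_vecMulVec, vecMulVec_mul, star_mulVec]

lemma trace_vecMulVec_mul_vecMulVec [Fintype ι] (u v w x : ι → ℂ) :
    (vecMulVec u v * vecMulVec w x).trace = (v ⬝ᵥ w) * (x ⬝ᵥ u) := by
  rw [vecMulVec_mul_vecMulVec, trace_vecMulVec, dotProduct_smul, smul_eq_mul, dotProduct_comm u x]

end PureState

namespace Kraus

variable {ι κ : Type*} [Fintype ι] [Fintype κ] {K : κ → Matrix ι ι ℂ}
  {Φ : Module.End ℂ (Matrix ι ι ℂ)}

lemma sum_star_mulVec_dotProduct_mulVec [DecidableEq ι] (hTP : ∑ i, (K i)ᴴ * K i = 1)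
    (u v : ι → ℂ) : ∑ i, star (K i *ᵥ u) ⬝ᵥ (K i *ᵥ v) = star u ⬝ᵥ v := by
  simp only [star_mulVec, ← dotProduct_mulVec, mulVec_mulVec, ← dotProduct_sum, ← sum_mulVec,
    hTP, one_mulVec]

lemma trace_apply [DecidableEq ι] (hK : ∀ X, Φ X = ∑ i, K i * X * (K i)ᴴ)
    (hTP : ∑ i, (K i)ᴴ * K i = 1) (X : Matrix ι ι ℂ) : (Φ X).trace = X.trace := by
  rw [hK, trace_sum]
  simp_rw [trace_mul_cycle _ X]
  rw [← trace_sum, ← Finset.sum_mul, hTP, one_mul]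

lemma conjTranspose_apply (hK : ∀ X, Φ X = ∑ i, K i * X * (K i)ᴴ) (X : Matrix ι ι ℂ) :
    (Φ X)ᴴ = Φ Xᴴ := by
  simp only [hK, conjTranspose_sum, conjTranspose_mul, conjTranspose_conjTranspose,
    Matrix.mul_assoc]

lemma apply_vecMulVec (hK : ∀ X, Φ X = ∑ i, K i * X * (K i)ᴴ) (a b : ι → ℂ) :
    Φ (vecMulVec a (star b)) = ∑ i, vecMulVec (K i *ᵥ a) (star (K i *ᵥ b)) := by
  simp only [hK, mul_vecMulVec_star_mul_conjTranspose]

lemma trace_apply_vecMulVec_mul (hK : ∀ X, Φ X = ∑ i, K i * X * (K i)ᴴ) (a b c e : ι → ℂ) :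
    (Φ (vecMulVec a (star b)) * Φ (vecMulVec c (star e))).trace =
      ∑ i, ∑ j, (star (K i *ᵥ b) ⬝ᵥ (K j *ᵥ c)) * (star (K j *ᵥ e) ⬝ᵥ (K i *ᵥ a)) := by
  simp only [apply_vecMulVec hK, Finset.sum_mul, Finset.mul_sum, trace_sum]
  rw [Finset.sum_comm]
  exact Finset.sum_congr rfl fun i _ => Finset.sum_congr rfl fun j _ =>
    trace_vecMulVec_mul_vecMulVec _ _ _ _

lemma trace_apply_pureState_mul (hK : ∀ X, Φ X = ∑ i, K i * X * (K i)ᴴ) (u v : ι → ℂ) :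
    (Φ (pureState u) * Φ (pureState v)).trace =
      ∑ i, ∑ j, (star (K i *ᵥ u) ⬝ᵥ (K j *ᵥ v)) * star (star (K i *ᵥ u) ⬝ᵥ (K j *ᵥ v)) := by
  simp only [pureState_eq_vecMulVec, trace_apply_vecMulVec_mul hK, ← star_dotProduct]

lemma trace_apply_pureState_mul_nonneg (hK : ∀ X, Φ X = ∑ i, K i * X * (K i)ᴴ)
    (u v : ι → ℂ) : 0 ≤ (Φ (pureState u) * Φ (pureState v)).trace := by
  rw [trace_apply_pureState_mul hK]
  exact Finset.sum_nonneg fun i _ => Finset.sum_nonneg fun j _ => mul_star_self_nonneg _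

lemma trace_apply_pureState_mul_self_ne_zero [DecidableEq ι]
    (hK : ∀ X, Φ X = ∑ i, K i * X * (K i)ᴴ) (hTP : ∑ i, (K i)ᴴ * K i = 1) {u : ι → ℂ}
    (hu : u ≠ 0) : (Φ (pureState u) * Φ (pureState u)).trace ≠ 0 := by
  intro h
  rw [trace_apply_pureState_mul hK, Finset.sum_eq_zero_iff_of_nonneg fun i _ =>
    Finset.sum_nonneg fun j _ => mul_star_self_nonneg _] at h
  have hdiag : ∀ i, star (K i *ᵥ u) ⬝ᵥ (K i *ᵥ u) = 0 := fun i => by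
    have := (Finset.sum_eq_zero_iff_of_nonneg fun j _ => mul_star_self_nonneg _).1
      (h i (Finset.mem_univ i)) i (Finset.mem_univ i)
    exact (mul_eq_zero.1 this).elim id star_eq_zero.1
  apply hu
  rw [← dotProduct_star_self_eq_zero, ← sum_star_mulVec_dotProduct_mulVec hTP]
  exact Finset.sum_eq_zero fun i _ => hdiag i

lemma mul_eq_zero_of_star_mulVec_dotProduct_mulVec_eq_zero [DecidableEq ι]
    (hK : ∀ X, Φ X = ∑ i, K i * X * (K i)ᴴ) (hTP : ∑ i, (K i)ᴴ * K i = 1)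
    {ν : Type*} [Fintype ν] {ψ : ν → ι → ℂ} (hψ : ∀ m, ψ m ≠ 0)
    (hΦ : ∀ m m', m ≠ m' → Φ (vecMulVec (ψ m) (star (ψ m'))) = 0) {a b : ν → ℂ}
    (h : ∀ i j, star (K i *ᵥ ∑ m, a m • ψ m) ⬝ᵥ (K j *ᵥ ∑ m, b m • ψ m) = 0) (m : ν) :
    a m * b m = 0 := by
  have htrace : (Φ (pureState (∑ m, a m • ψ m)) * Φ (pureState (∑ m, b m • ψ m))).trace = 0 := by
    simp [trace_apply_pureState_mul hK, h]
  rw [map_pureState_sum_smul Φ hΦ, map_pureState_sum_smul Φ hΦ, Finset.sum_mul_sum] at htrace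
  simp only [smul_mul_smul_comm, trace_sum, trace_smul, smul_eq_mul] at htrace
  have hnonneg : ∀ m m', 0 ≤ a m * star (a m) * (b m' * star (b m')) *
      (Φ (pureState (ψ m)) * Φ (pureState (ψ m'))).trace := fun m m' =>
    mul_nonneg (mul_nonneg (mul_star_self_nonneg _) (mul_star_self_nonneg _))
      (trace_apply_pureState_mul_nonneg hK _ _)
  rw [Finset.sum_eq_zero_iff_of_nonneg fun m _ => Finset.sum_nonneg fun m' _ => hnonneg m m']
    at htrace
  have hdiag := (Finset.sum_eq_zero_iff_of_nonneg fun m' _ => hnonneg m m').1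
    (htrace m (Finset.mem_univ m)) m (Finset.mem_univ m)
  have hab : a m * b m * star (a m * b m) = 0 := by
    rw [star_mul']
    linear_combination (mul_eq_zero.1 hdiag).resolve_right
      (trace_apply_pureState_mul_self_ne_zero hK hTP (hψ m))
  exact (mul_eq_zero.1 hab).elim id star_eq_zero.1

end Kraus

section ComplementaryChannel

variable {d p : ℕ} {K : Fin p → Mat d} {Φ : Module.End ℂ (Mat d)}

lemma compChannel_pureState_apply (K : Fin p → Mat d) (ψ : Fin d → ℂ) (i j : Fin p) :
    compChannel K (pureState ψ) i j = star (K i *ᵥ ψ) ⬝ᵥ (K j *ᵥ ψ) := by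
  rw [compChannel, of_apply, pureState_eq_vecMulVec, mul_vecMulVec, trace_vecMulVec,
    dotProduct_comm, ← mulVec_mulVec, star_mulVec, dotProduct_mulVec]

lemma trace_compChannel_pureState_mul (hK : ∀ X, Φ X = ∑ i, K i * X * (K i)ᴴ)
    (ψ φ : Fin d → ℂ) :
    (compChannel K (pureState ψ) * compChannel K (pureState φ)).trace =
      ((Φ (vecMulVec φ (star ψ)))ᴴ * Φ (vecMulVec φ (star ψ))).trace := by
  rw [Kraus.conjTranspose_apply hK, conjTranspose_vecMulVec, star_star,
    Kraus.trace_apply_vecMulVec_mul hK]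
  simp only [trace, diag, mul_apply, compChannel_pureState_apply]
  rw [Finset.sum_comm]
  exact Finset.sum_congr rfl fun _ _ => Finset.sum_congr rfl fun _ _ => mul_comm _ _

lemma apply_vecMulVec_eq_zero_of_trace_compChannel_mul_eq_zero
    (hK : ∀ X, Φ X = ∑ i, K i * X * (K i)ᴴ) {ψ φ : Fin d → ℂ}
    (h : (compChannel K (pureState ψ) * compChannel K (pureState φ)).trace = 0) :
    Φ (vecMulVec φ (star ψ)) = 0 := by
  rwa [trace_compChannel_pureState_mul hK, trace_conjTranspose_mul_self_eq_zero_iff] at h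

lemma star_dotProduct_eq_zero_of_apply_vecMulVec_eq_zero
    (hK : ∀ X, Φ X = ∑ i, K i * X * (K i)ᴴ) (hTP : ∑ i, (K i)ᴴ * K i = 1) {ψ φ : Fin d → ℂ}
    (h : Φ (vecMulVec φ (star ψ)) = 0) : star ψ ⬝ᵥ φ = 0 := by
  have := congrArg trace h
  rwa [Kraus.trace_apply hK hTP, trace_vecMulVec, trace_zero, dotProduct_comm] at this

end ComplementaryChannel

section Correctable

lemma isState_inv_smul_pureState {n : ℕ} {x : Fin n → ℂ} (hx : x ≠ 0) :
    IsState ((star x ⬝ᵥ x)⁻¹ • pureState x) := by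
  refine ⟨(posSemidef_vecMulVec_self_star x).smul
    (inv_nonneg_of_nonneg (dotProduct_star_self_nonneg x)), ?_⟩
  rw [trace_smul, pureState_eq_vecMulVec, trace_vecMulVec, dotProduct_comm x, smul_eq_mul,
    inv_mul_cancel₀ (dotProduct_star_self_eq_zero.not.2 hx)]

lemma range_mulVecLin_smul_pureState_le {n : ℕ} {C : Submodule ℂ (Fin n → ℂ)} {x : Fin n → ℂ}
    (hx : x ∈ C) (c : ℂ) : LinearMap.range (c • pureState x).mulVecLin ≤ C := by
  rintro _ ⟨z, rfl⟩
  rw [mulVecLin_apply, smul_mulVec, pureState_mulVec]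
  exact C.smul_mem _ (C.smul_mem _ hx)

lemma correctable_bot {d : ℕ} (Φ : Mat d →ₗ[ℂ] Mat d) : Correctable Φ ⊥ := by
  refine ⟨LinearMap.id, ⟨1, fun _ => 1, fun X => by simp, by simp⟩, fun ρ hρ hrange => ?_⟩
  have : ρ = 0 := by
    rw [le_bot_iff, LinearMap.range_eq_bot] at hrange
    exact Matrix.toLin'.map_eq_zero_iff.1 hrange
  simp [this, IsState] at hρ

variable {d p : ℕ} {K : Fin p → Mat d} {Φ : Module.End ℂ (Mat d)} {C : Submodule ℂ (Fin d → ℂ)}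

lemma Correctable.exists_isChannel_recovers_pureState (hC : Correctable Φ C) :
    ∃ R : Mat d →ₗ[ℂ] Mat d, IsChannel R ∧ ∀ x ∈ C, R (Φ (pureState x)) = pureState x := by
  obtain ⟨R, hR, hrec⟩ := hC
  refine ⟨R, hR, fun x hx => ?_⟩
  rcases eq_or_ne x 0 with rfl | hx0
  · simp [pureState_eq_vecMulVec]
  have := hrec _ (isState_inv_smul_pureState hx0) (range_mulVecLin_smul_pureState_le hx _)
  rwa [map_smul, map_smul, smul_right_inj (inv_ne_zero (dotProduct_star_self_eq_zero.not.2 hx0))]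
    at this

lemma Correctable.exists_kraus_sum_pureState_eq (hK : ∀ X, Φ X = ∑ i, K i * X * (K i)ᴴ)
    (hC : Correctable Φ C) :
    ∃ (q : ℕ) (L : Fin q → Mat d), ∑ l, (L l)ᴴ * L l = 1 ∧
      ∀ x ∈ C, ∑ li : Fin q × Fin p, pureState (L li.1 *ᵥ (K li.2 *ᵥ x)) = pureState x := by
  obtain ⟨R, ⟨q, L, hL, hLTP⟩, hR⟩ := hC.exists_isChannel_recovers_pureState
  refine ⟨q, L, hLTP, fun x hx => ?_⟩
  rw [← hR x hx, hL, hK, Fintype.sum_prod_type]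
  simp only [Matrix.mul_sum, Matrix.sum_mul, pureState_eq_vecMulVec,
    mul_vecMulVec_star_mul_conjTranspose]

lemma Correctable.star_mulVec_dotProduct_mulVec_eq_zero (hK : ∀ X, Φ X = ∑ i, K i * X * (K i)ᴴ)
    (hC : Correctable Φ C) {x y : Fin d → ℂ} (hx : x ∈ C) (hy : y ∈ C) (hxy : star x ⬝ᵥ y = 0)
    (i j : Fin p) : star (K i *ᵥ x) ⬝ᵥ (K j *ᵥ y) = 0 := by
  obtain ⟨q, L, hLTP, hrec⟩ := hC.exists_kraus_sum_pureState_eq hK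
  -- `⟨K_i x, K_j y⟩ = ∑_l ⟨L_l K_i x, L_l K_j y⟩`, and `L_l K_j y ⊥ x` kills every term.
  rw [← Kraus.sum_star_mulVec_dotProduct_mulVec hLTP]
  refine Finset.sum_eq_zero fun l _ => ?_
  have hyx : star (L l *ᵥ (K j *ᵥ y)) ⬝ᵥ x = 0 :=
    star_dotProduct_eq_zero_of_sum_pureState_eq (hrec y hy)
      (by rw [star_dotProduct, hxy, star_zero]) (l, j)
  exact star_dotProduct_eq_zero_of_sum_pureState_eq (hrec x hx)
    (by rw [star_dotProduct, hyx, star_zero]) (l, i)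

end Correctable

open Module Submodule

section OrthonormalCode

variable {𝕜 E : Type*} [RCLike 𝕜] [NormedAddCommGroup E] [InnerProductSpace 𝕜 E]

lemma exists_orthonormal_pair_of_two_le_finrank (V : Submodule 𝕜 E) [FiniteDimensional 𝕜 V]
    (hV : 2 ≤ finrank 𝕜 V) :
    ∃ u ∈ V, ∃ v ∈ V, ‖u‖ = 1 ∧ ‖v‖ = 1 ∧ inner 𝕜 u v = 0 := by
  let b := stdOrthonormalBasis 𝕜 V
  refine ⟨b ⟨0, by omega⟩, (b _).2, b ⟨1, by omega⟩, (b _).2, b.orthonormal.1 _,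
    b.orthonormal.1 _, b.orthonormal.2 (by simp)⟩

lemma eq_zero_of_mem_span_of_forall_inner_eq_zero {ν : Type*} [Fintype ν] {ψ : ν → E}
    (hψ : Orthonormal 𝕜 ψ) {u : E} (hu : u ∈ span 𝕜 (Set.range ψ))
    (h : ∀ m, inner 𝕜 (ψ m) u = 0) : u = 0 := by
  obtain ⟨a, rfl⟩ := (mem_span_range_iff_exists_fun 𝕜).1 hu
  have ha : ∀ m, a m = 0 := fun m => by rw [← hψ.inner_right_fintype a m, h]
  simp [ha]

theorem card_add_finrank_le_of_inner_mul_inner_eq_zero [FiniteDimensional 𝕜 E]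
    {M : ℕ} {ψ : Fin M → E} (hψ : Orthonormal 𝕜 ψ) (C : Submodule 𝕜 E)
    (h : ∀ x ∈ span 𝕜 (Set.range ψ) ⊓ C, ∀ y ∈ span 𝕜 (Set.range ψ) ⊓ C,
      inner 𝕜 x y = 0 → ∀ m, inner 𝕜 (ψ m) x * inner 𝕜 (ψ m) y = 0) :
    M + finrank 𝕜 C ≤ finrank 𝕜 E + 1 := by
  by_contra! hlt
  have hV : 2 ≤ finrank 𝕜 ↥(span 𝕜 (Set.range ψ) ⊓ C) := by
    have := finrank_sup_add_finrank_inf_eq (span 𝕜 (Set.range ψ)) C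
    have := (span 𝕜 (Set.range ψ) ⊔ C).finrank_le
    rw [finrank_span_eq_card hψ.linearIndependent, Fintype.card_fin] at *
    omega
  obtain ⟨u, huV, v, hvV, hu, hv, huv⟩ := exists_orthonormal_pair_of_two_le_finrank _ hV
  have hsum : inner 𝕜 (u + v) (u - v) = 0 := by
    rw [inner_add_left, inner_sub_right, inner_sub_right, inner_self_eq_norm_sq_to_K,
      inner_self_eq_norm_sq_to_K, hu, hv, huv, inner_eq_zero_symm.1 huv]
    ring
  have hcoeff : ∀ m, inner 𝕜 (ψ m) u = 0 := fun m => by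
    have h₁ := h u huV v hvV huv m
    have h₂ := h _ (add_mem huV hvV) _ (sub_mem huV hvV) hsum m
    rw [inner_add_right, inner_sub_right] at h₂
    refine pow_eq_zero_iff (n := 4) (by norm_num) |>.1 ?_
    linear_combination inner 𝕜 (ψ m) u ^ 2 * h₂ + inner 𝕜 (ψ m) u * inner 𝕜 (ψ m) v * h₁
  have : u = 0 := eq_zero_of_mem_span_of_forall_inner_eq_zero hψ (mem_inf.1 huV).1 hcoeff
  simp [this] at hu

theorem card_add_finrank_le_of_dotProduct_mul_dotProduct_eq_zero {ι : Type*} [Fintype ι]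
    {M : ℕ} {ψ : Fin M → ι → ℂ} (hψ : ∀ m m', star (ψ m) ⬝ᵥ ψ m' = if m = m' then 1 else 0)
    (C : Submodule ℂ (ι → ℂ))
    (h : ∀ x ∈ span ℂ (Set.range ψ) ⊓ C, ∀ y ∈ span ℂ (Set.range ψ) ⊓ C,
      star x ⬝ᵥ y = 0 → ∀ m, (star (ψ m) ⬝ᵥ x) * (star (ψ m) ⬝ᵥ y) = 0) :
    M + finrank ℂ C ≤ Fintype.card ι + 1 := by
  let e : (ι → ℂ) ≃ₗ[ℂ] EuclideanSpace ℂ ι := (WithLp.linearEquiv 2 ℂ (ι → ℂ)).symm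
  have hinner : ∀ x y : ι → ℂ, inner ℂ (e x) (e y) = star x ⬝ᵥ y := fun x y => by
    simp [e, EuclideanSpace.inner_toLp_toLp, dotProduct_comm]
  have hspan : span ℂ (Set.range (e ∘ ψ)) = (span ℂ (Set.range ψ)).map e.toLinearMap := by
    rw [Set.range_comp, map_span]
    rfl
  have key := card_add_finrank_le_of_inner_mul_inner_eq_zero (E := EuclideanSpace ℂ ι)
    (ψ := e ∘ ψ) (orthonormal_iff_ite.2 fun m m' => by simp [hinner, hψ])
    (C.map e.toLinearMap) ?_
  · rwa [LinearEquiv.finrank_map_eq, finrank_euclideanSpace] at key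
  intro x hx y hy hxy m
  rw [hspan, ← map_inf _ e.injective, mem_map_equiv] at hx hy
  simpa [← hinner] using h _ hx _ hy (by simpa [← hinner] using hxy) m

end OrthonormalCode

theorem card_add_finrank_le_of_compChannel_code {d p : ℕ} {K : Fin p → Mat d}
    {Φ : Module.End ℂ (Mat d)} (hK : ∀ X, Φ X = ∑ i, K i * X * (K i)ᴴ)
    (hTP : ∑ i, (K i)ᴴ * K i = 1) {M : ℕ} {ψ : Fin M → Fin d → ℂ} (hunit : ∀ m, IsUnitVec (ψ m))
    (hcode : ∀ m m', m ≠ m' →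
      (compChannel K (pureState (ψ m)) * compChannel K (pureState (ψ m'))).trace = 0)
    {C : Submodule ℂ (Fin d → ℂ)} (hC : Correctable Φ C) :
    M + finrank ℂ C ≤ d + 1 := by
  have hΦ : ∀ m m', m ≠ m' → Φ (vecMulVec (ψ m) (star (ψ m'))) = 0 := fun m m' hne =>
    apply_vecMulVec_eq_zero_of_trace_compChannel_mul_eq_zero hK (hcode m' m hne.symm)
  have hψ : ∀ m m', star (ψ m) ⬝ᵥ ψ m' = if m = m' then 1 else 0 := by
    intro m m'
    split_ifs with h
    · exact h ▸ hunit m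
    · exact star_dotProduct_eq_zero_of_apply_vecMulVec_eq_zero hK hTP (hΦ m' m (Ne.symm h))
  have hψ0 : ∀ m, ψ m ≠ 0 := fun m h0 => by simpa [h0] using hψ m m
  have hcoeff : ∀ (a : Fin M → ℂ) m, star (ψ m) ⬝ᵥ ∑ m', a m' • ψ m' = a m := fun a m => by
    simp [dotProduct_sum, hψ]
  simpa using card_add_finrank_le_of_dotProduct_mul_dotProduct_eq_zero hψ C
    fun x hx y hy hxy m => by
      obtain ⟨a, rfl⟩ := (mem_span_range_iff_exists_fun ℂ).1 (mem_inf.1 hx).1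
      obtain ⟨b, rfl⟩ := (mem_span_range_iff_exists_fun ℂ).1 (mem_inf.1 hy).1
      rw [hcoeff, hcoeff]
      exact Kraus.mul_eq_zero_of_star_mulVec_dotProduct_mulVec_eq_zero hK hTP hψ0 hΦ
        (hC.star_mulVec_dotProduct_mulVec_eq_zero hK (mem_inf.1 hx).2 (mem_inf.1 hy).2 hxy) m

lemma sSup_add_sSup_le {S T : Set ℕ} {n : ℕ} (hS : S.Nonempty) (hT : T.Nonempty)
    (h : ∀ a ∈ S, ∀ b ∈ T, a + b ≤ n) : sSup S + sSup T ≤ n := by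
  obtain ⟨a₀, ha₀⟩ := hS
  obtain ⟨b₀, hb₀⟩ := hT
  have hS' : BddAbove S := ⟨n, fun a ha => (Nat.le_add_right a b₀).trans (h a ha b₀ hb₀)⟩
  have hT' : BddAbove T := ⟨n, fun b hb => (Nat.le_add_left b a₀).trans (h a₀ ha₀ b hb)⟩
  exact h _ (Nat.sSup_mem ⟨a₀, ha₀⟩ hS') _ (Nat.sSup_mem ⟨b₀, hb₀⟩ hT')

theorem capacity_tradeoff_general (d p : ℕ) (K : Fin p → Mat d)
    (Φ : Module.End ℂ (Mat d))
    (hK : ∀ X, Φ X = ∑ i, K i * X * (K i)ᴴ) (hTP : ∑ i, (K i)ᴴ * K i = 1) :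
    sSup {M : ℕ | ∃ ψ : Fin M → Fin d → ℂ, (∀ m, IsUnitVec (ψ m)) ∧
        ∀ m m', m ≠ m' →
          (compChannel K (pureState (ψ m)) * compChannel K (pureState (ψ m'))).trace = 0} +
      Dquantum Φ ≤ d + 1 := by
  refine sSup_add_sSup_le ⟨0, Fin.elim0, fun m => m.elim0, fun m => m.elim0⟩
    ⟨0, ⊥, correctable_bot Φ, finrank_bot ℂ _⟩ ?_
  rintro M ⟨ψ, hunit, hcode⟩ _ ⟨C, hC, rfl⟩
  exact card_add_finrank_le_of_compChannel_code hK hTP hunit hcode hC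

/-- Trade-off relation: the one-shot zero-error classical capacity of
the complementary channel and the one-shot zero-error quantum capacity of the channel
satisfy `M(Φ^C) + D(Φ) ≤ d + 1`. -/
theorem capacity_tradeoff (d p : ℕ) (K : Fin p → Mat d) (hind : LinearIndependent ℂ K)
    (Φ : Module.End ℂ (Mat d))
    (hK : ∀ X, Φ X = ∑ i, K i * X * (K i)ᴴ) (hTP : ∑ i, (K i)ᴴ * K i = 1) :
    sSup {M : ℕ | ∃ ψ : Fin M → Fin d → ℂ, (∀ m, IsUnitVec (ψ m)) ∧
        ∀ m m', m ≠ m' →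
          (compChannel K (pureState (ψ m)) * compChannel K (pureState (ψ m'))).trace = 0} +
      Dquantum Φ ≤ d + 1 :=
  capacity_tradeoff_general d p K Φ hK hTP
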